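/- Let X be a Polish space and let F : C(X) → ℝ be a convex nondecreasing function defined on all continuous (not necessarily bounded) real-valued functions on X, with F(0) = 0. Then F automatically satisfies the upward continuity property: for every sequence f_n ∈ C(X) with f_n ↑ f ∈ C(X) pointwise on X, one has F(f_n) ↑ F(f). -/

import Mathlib

/-!
Let `μ` be a subgradient of `F` at `f`; it exists by Hahn–Banach, applied below the one-sided
directional derivative of `F` at `f`, which is sublinear. Since `F` is monotone, `μ` is a positive
linear functional, and `F f - μ (f - g n) ≤ F (g n) ≤ F f`, so it suffices that `μ (f - g n) → 0`.

This is Daniell continuity of positive functionals on all of `C(X, ℝ)`. For `δ > 0` put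
`T n = (f - g n - δ)⁺`. Near a point where `f - g N < δ` all `T n` with `n ≥ N` vanish, so the
family `(T n)` is locally finite and `Φ = ∑ T n` is continuous. Then `∑ μ (T n) ≤ μ Φ < ∞`, hence
`μ (T n) → 0`, and `μ (f - g n) ≤ μ (T n) + δ μ 1`.
-/

open Filter Topology Set

section Subgradient

variable {E : Type*} [AddCommGroup E] [Module ℝ E] {F : E → ℝ}

noncomputable def lineSlope (F : E → ℝ) (f v : E) (t : ℝ) : ℝ := (F (f + t • v) - F f) / t

/-- For convex `F` this is the right derivative of `t ↦ F (f + t • v)` at `0`: the difference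
quotients increase with `t`. -/
noncomputable def rightLineDeriv (F : E → ℝ) (f v : E) : ℝ := ⨅ t : Ioi (0 : ℝ), lineSlope F f v t

theorem ConvexOn.comp_line (hF : ConvexOn ℝ univ F) (f v : E) :
    ConvexOn ℝ univ fun t : ℝ => F (f + t • v) := by
  simpa [Function.comp_def, AffineMap.lineMap_apply, add_comm] using
    hF.comp_affineMap (AffineMap.lineMap f (f + v))

theorem lineSlope_eq_slope (f v : E) {t : ℝ} :
    lineSlope F f v t = slope (fun s : ℝ => F (f + s • v)) 0 t := by
  simp [lineSlope, slope_def_field]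

variable (hF : ConvexOn ℝ univ F) (f : E)
include hF

theorem ConvexOn.lineSlope_mono {v : E} {s t : ℝ} (hs : s ≠ 0) (ht : t ≠ 0) (hst : s ≤ t) :
    lineSlope F f v s ≤ lineSlope F f v t := by
  simp only [lineSlope_eq_slope]
  exact (hF.comp_line f v).slope_mono trivial ⟨trivial, hs⟩ ⟨trivial, ht⟩ hst

theorem ConvexOn.sub_le_lineSlope (v : E) {t : ℝ} (ht : 0 < t) :
    F f - F (f - v) ≤ lineSlope F f v t := by
  have := hF.lineSlope_mono f (v := v) (by norm_num : (-1 : ℝ) ≠ 0) ht.ne' (by linarith)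
  convert this using 1
  simp [lineSlope, ← sub_eq_add_neg, div_neg]

theorem ConvexOn.rightLineDeriv_le_lineSlope (v : E) {t : ℝ} (ht : 0 < t) :
    rightLineDeriv F f v ≤ lineSlope F f v t := by
  refine ciInf_le (f := fun s : Ioi (0 : ℝ) => lineSlope F f v s) ⟨F f - F (f - v), ?_⟩ ⟨t, ht⟩
  rintro _ ⟨s, rfl⟩
  exact hF.sub_le_lineSlope f v s.2

omit hF in
theorem le_rightLineDeriv {v : E} {a : ℝ} (h : ∀ t, 0 < t → a ≤ lineSlope F f v t) :
    a ≤ rightLineDeriv F f v :=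
  le_ciInf fun t => h t t.2

omit hF in
theorem lineSlope_smul (f v : E) (c t : ℝ) :
    lineSlope F f (c • v) t = c * lineSlope F f v (t * c) := by
  rcases eq_or_ne c 0 with rfl | hc
  · simp [lineSlope]
  rcases eq_or_ne t 0 with rfl | ht
  · simp [lineSlope]
  simp only [lineSlope, smul_smul]
  field_simp

theorem ConvexOn.rightLineDeriv_smul (v : E) {c : ℝ} (hc : 0 < c) :
    rightLineDeriv F f (c • v) = c * rightLineDeriv F f v := by
  refine le_antisymm ?_ (le_rightLineDeriv f fun t ht => ?_)
  · rw [← div_le_iff₀' hc]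
    refine le_rightLineDeriv f fun t ht => ?_
    rw [div_le_iff₀' hc, ← div_mul_cancel₀ t hc.ne', ← lineSlope_smul]
    exact hF.rightLineDeriv_le_lineSlope f _ (div_pos ht hc)
  · rw [lineSlope_smul]
    exact mul_le_mul_of_nonneg_left (hF.rightLineDeriv_le_lineSlope f v (mul_pos ht hc)) hc.le

theorem ConvexOn.lineSlope_add_le (u v : E) {r : ℝ} (hr : 0 < r) :
    lineSlope F f (u + v) r ≤ lineSlope F f u (2 * r) + lineSlope F f v (2 * r) := by
  have hmid : F ((1 / 2 : ℝ) • (f + (2 * r) • u) + (1 / 2 : ℝ) • (f + (2 * r) • v)) ≤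
      (1 / 2 : ℝ) • F (f + (2 * r) • u) + (1 / 2 : ℝ) • F (f + (2 * r) • v) :=
    hF.2 (mem_univ _) (mem_univ _) (by norm_num) (by norm_num) (by norm_num)
  rw [show (1 / 2 : ℝ) • (f + (2 * r) • u) + (1 / 2 : ℝ) • (f + (2 * r) • v) = f + r • (u + v) by
    module, smul_eq_mul, smul_eq_mul] at hmid
  simp only [lineSlope]
  rw [← add_div, div_le_div_iff₀ hr (by positivity)]
  nlinarith [mul_le_mul_of_nonneg_left hmid hr.le]

theorem ConvexOn.rightLineDeriv_add_le (u v : E) :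
    rightLineDeriv F f (u + v) ≤ rightLineDeriv F f u + rightLineDeriv F f v := by
  refine le_ciInf_add_ciInf fun ⟨s, hs⟩ ⟨t, ht⟩ => ?_
  have hst : 0 < min s t := lt_min hs ht
  calc rightLineDeriv F f (u + v) ≤ lineSlope F f (u + v) (min s t / 2) :=
        hF.rightLineDeriv_le_lineSlope f _ (half_pos hst)
    _ ≤ lineSlope F f u (2 * (min s t / 2)) + lineSlope F f v (2 * (min s t / 2)) :=
        hF.lineSlope_add_le f u v (half_pos hst)
    _ ≤ lineSlope F f u s + lineSlope F f v t := by
        rw [mul_div_cancel₀ _ two_ne_zero]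
        exact add_le_add (hF.lineSlope_mono f hst.ne' hs.ne' (min_le_left s t))
          (hF.lineSlope_mono f hst.ne' ht.ne' (min_le_right s t))

theorem ConvexOn.exists_subgradient :
    ∃ μ : E →ₗ[ℝ] ℝ, ∀ v, μ v ≤ F (f + v) - F f := by
  have hzero : rightLineDeriv F f 0 = 0 := by
    have := hF.rightLineDeriv_smul f 0 two_pos
    rw [smul_zero] at this
    linarith
  obtain ⟨μ, -, hμ⟩ := exists_extension_of_le_sublinear ⟨⊥, 0⟩ (rightLineDeriv F f)
    (fun c hc v => hF.rightLineDeriv_smul f v hc) (hF.rightLineDeriv_add_le f) fun x => by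
      obtain ⟨x, hx⟩ := x
      obtain rfl := (Submodule.mem_bot ℝ).1 hx
      simp [hzero]
  refine ⟨μ, fun v => (hμ v).trans ?_⟩
  simpa [lineSlope] using hF.rightLineDeriv_le_lineSlope f v one_pos

omit hF in
theorem LinearMap.monotone_of_le_sub [PartialOrder E] [IsOrderedAddMonoid E] (hmono : Monotone F)
    {μ : E →ₗ[ℝ] ℝ} (hμ : ∀ v, μ v ≤ F (f + v) - F f) : Monotone μ := by
  intro u v huv
  have hle : F (f + (u - v)) ≤ F f := hmono (add_le_of_nonpos_right (sub_nonpos.2 huv))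
  have := hμ (u - v)
  rw [map_sub] at this
  linarith

end Subgradient

section PositiveFunctional

variable {X : Type*} [TopologicalSpace X] {μ : C(X, ℝ) →ₗ[ℝ] ℝ}

theorem sum_range_le_finsum_of_nonneg {f : ℕ → ℝ} (hf : ∀ n, 0 ≤ f n)
    (hfin : (Function.support f).Finite) (K : ℕ) : ∑ n ∈ Finset.range K, f n ≤ ∑ᶠ n, f n := by
  classical
  rw [finsum_eq_sum_of_support_subset f (s := Finset.range K ∪ hfin.toFinset) (by simp)]
  exact Finset.sum_le_sum_of_subset_of_nonneg Finset.subset_union_left fun n _ _ => hf n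

theorem LinearMap.summable_of_locallyFinite_support (hμ : Monotone μ) {T : ℕ → C(X, ℝ)}
    (hT : ∀ n, 0 ≤ T n) (hfin : LocallyFinite fun n => Function.support (T n)) :
    Summable fun n => μ (T n) := by
  let Φ : C(X, ℝ) := ⟨fun x => ∑ᶠ n, T n x, continuous_finsum (fun n => (T n).continuous) hfin⟩
  refine summable_of_sum_range_le (c := μ Φ) (fun n => map_zero μ ▸ hμ (hT n)) fun K => ?_
  rw [← map_sum]
  refine hμ (ContinuousMap.le_def.2 fun x => ?_)
  simpa [Φ] using sum_range_le_finsum_of_nonneg (fun n => hT n x) (hfin.point_finite x) K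

theorem locallyFinite_support_sub_const_sup_zero {h : ℕ → C(X, ℝ)} (hanti : Antitone h)
    (hlim : ∀ x, Tendsto (fun n => h n x) atTop (𝓝 0)) {δ : ℝ} (hδ : 0 < δ) :
    LocallyFinite fun n => Function.support ((h n - ContinuousMap.const X δ) ⊔ 0) := by
  intro x
  obtain ⟨N, hN⟩ := ((tendsto_order.1 (hlim x)).2 δ hδ).exists
  refine ⟨{y | h N y < δ}, (isOpen_lt (h N).continuous continuous_const).mem_nhds hN,
    (finite_Iio N).subset fun n ⟨y, hy, hyU⟩ => ?_⟩
  by_contra! hn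
  exact hy (by simpa using (hanti (not_lt.1 hn) y).trans hyU.le)

theorem LinearMap.tendsto_zero_of_antitone (hμ : Monotone μ) {h : ℕ → C(X, ℝ)}
    (hanti : Antitone h) (hlim : ∀ x, Tendsto (fun n => h n x) atTop (𝓝 0)) :
    Tendsto (fun n => μ (h n)) atTop (𝓝 0) := by
  have hnonneg : ∀ n, 0 ≤ μ (h n) := fun n => map_zero μ ▸ hμ (ContinuousMap.le_def.2 fun x =>
    le_of_tendsto (hlim x) (eventually_atTop.2 ⟨n, fun m hm => hanti hm x⟩))
  refine tendsto_order.2 ⟨fun a ha => .of_forall fun n => ha.trans_le (hnonneg n), fun ε hε => ?_⟩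
  obtain ⟨δ, hδ, hδε⟩ := exists_pos_mul_lt (half_pos hε) (μ 1)
  have htrunc := (summable_of_locallyFinite_support hμ (fun n => le_sup_right)
    (locallyFinite_support_sub_const_sup_zero hanti hlim hδ)).tendsto_atTop_zero
  filter_upwards [(tendsto_order.1 htrunc).2 _ (half_pos hε)] with n hn
  have hle : h n ≤ (h n - ContinuousMap.const X δ) ⊔ 0 + δ • 1 :=
    ContinuousMap.le_def.2 fun x => by simp [← sub_le_iff_le_add]
  calc μ (h n) ≤ μ ((h n - ContinuousMap.const X δ) ⊔ 0) + μ 1 * δ := by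
        simpa [mul_comm] using hμ hle
    _ < ε := by linarith

end PositiveFunctional

theorem stmt17_general {X : Type*} [TopologicalSpace X]
    (F : C(X, ℝ) → ℝ) (hconv : ConvexOn ℝ Set.univ F) (hmono : Monotone F) :
    ∀ (f : C(X, ℝ)) (g : ℕ → C(X, ℝ)), Monotone g →
      (∀ x, Tendsto (fun n => g n x) atTop (𝓝 (f x))) →
      Tendsto (fun n => F (g n)) atTop (𝓝 (F f)) := by
  intro f g hg hlim
  obtain ⟨μ, hμ⟩ := hconv.exists_subgradient f
  have hg_le : ∀ n, g n ≤ f := fun n => ContinuousMap.le_def.2 fun x =>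
    Monotone.ge_of_tendsto (f := fun n => g n x) (fun a b hab => hg hab x) (hlim x) n
  have hgap : Tendsto (fun n => μ (f - g n)) atTop (𝓝 0) :=
    LinearMap.tendsto_zero_of_antitone (LinearMap.monotone_of_le_sub f hmono hμ)
      (fun m n hmn => sub_le_sub_left (hg hmn) f)
      fun x => by simpa using (tendsto_const_nhds (x := f x)).sub (hlim x)
  have hlower : ∀ n, F f - μ (f - g n) ≤ F (g n) := fun n => by
    have := hμ (g n - f)
    rw [add_sub_cancel, ← neg_sub, map_neg] at this
    linarith
  exact tendsto_of_tendsto_of_tendsto_of_le_of_le (by simpa using tendsto_const_nhds.sub hgap)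
    tendsto_const_nhds hlower fun n => hmono (hg_le n)

/-- A convex nondecreasing `F : C(X) → ℝ` with `F 0 = 0`, defined on all
continuous real functions on a Polish space `X`, is automatically upward continuous:
`f_n ↑ f` pointwise (with `f_n, f ∈ C(X)`) implies `F(f_n) ↑ F(f)`. -/
theorem stmt17 {X : Type*} [TopologicalSpace X] [PolishSpace X]
    (F : C(X, ℝ) → ℝ) (hconv : ConvexOn ℝ Set.univ F) (hmono : Monotone F)
    (hF0 : F 0 = 0) :
    ∀ (f : C(X, ℝ)) (g : ℕ → C(X, ℝ)), Monotone g →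
      (∀ x, Tendsto (fun n => g n x) atTop (𝓝 (f x))) →
      Tendsto (fun n => F (g n)) atTop (𝓝 (F f)) :=
  stmt17_general F hconv hmono
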